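/- arXiv:1908.06428 — 7 statements merged into one kernel-verified Lean document; each statement's English description precedes it below -/
import Mathlib

section
/- For every nonempty word w and every k ≥ 1, the number of distinct factors of w of length k is at most g(w)·k. -/
/-- A straight-line program over alphabet `α`, in topologically-sorted form:
nonterminals are `Fin n`, each has exactly one nonempty right-hand side, and
right-hand sides only refer to strictly smaller nonterminals (acyclicity). -/
structure SLP (α : Type) where
  n : ℕ
  rhs : Fin n → List (α ⊕ Fin n)
  rhs_ne : ∀ i, rhs i ≠ []
  acyc : ∀ i j, Sum.inr j ∈ rhs i → (j : ℕ) < (i : ℕ)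
  start : Fin n

namespace SLP

variable {α : Type}

/-- The word produced by nonterminal `i`. -/
def valAux (G : SLP α) (i : Fin G.n) : List α :=
  (G.rhs i).attach.flatMap (fun s =>
    match s with
    | ⟨Sum.inl a, _⟩ => [a]
    | ⟨Sum.inr j, hj⟩ => G.valAux j)
termination_by (i : ℕ)
decreasing_by exact G.acyc i j hj

/-- The word produced by the SLP. -/
def val (G : SLP α) : List α := G.valAux G.start

/-- The size of the SLP: sum of lengths of all right-hand sides. -/
def size (G : SLP α) : ℕ := ∑ i : Fin G.n, (G.rhs i).length

end SLP

/-- `g w`: the minimal size of an SLP producing `w`. -/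
noncomputable def g {α : Type} (w : List α) : ℕ :=
  sInf { s | ∃ G : SLP α, G.size = s ∧ G.val = w }

/-!
Take an SLP `G` of size `g w` producing `w`. A length-`k` factor of the expansion of a
right-hand side `s₁ ⋯ sₘ` either lies inside the expansion of a single symbol `sⱼ` and ends before
its last letter, so that `sⱼ` is a smaller nonterminal, or it starts in the expansion of some `sⱼ`
and reaches its last letter, in which case it is determined by `j` and by how many of its
`≤ k` letters lie in `sⱼ`. Descending through the acyclic grammar, every length-`k` factor of `w`
is of the second kind for some rule, so there are at most `∑ |rhs| * k = g w * k` of them.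
-/

namespace List

variable {α : Type} [DecidableEq α]

/-- The length-`k` windows of `L.flatten` that start inside some `l ∈ L` and reach its last
letter; `m` is the number of letters of the window that lie in `l`. -/
def crossingWindows (k : ℕ) : List (List α) → Finset (List α)
  | [] => ∅
  | l :: L =>
    (Finset.Icc 1 k).image (fun m => (l.drop (l.length - m) ++ L.flatten).take k) ∪
      crossingWindows k L

theorem card_crossingWindows_le (k : ℕ) (L : List (List α)) :
    (crossingWindows k L).card ≤ L.length * k := by
  induction L with
  | nil => simp [crossingWindows]
  | cons l L ih =>
    calc (crossingWindows k (l :: L)).card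
        ≤ (Finset.Icc 1 k).card + (crossingWindows k L).card :=
          (Finset.card_union_le _ _).trans (Nat.add_le_add_right Finset.card_image_le _)
      _ ≤ (l :: L).length * k := by
          simp only [Nat.card_Icc, Nat.add_sub_cancel, length_cons, Nat.succ_mul]; omega

theorem mem_image_of_suffix_append_prefix {k : ℕ} {l r a b : List α}
    (hab : (a ++ b).length = k) (ha : a ≠ []) (hal : a <:+ l) (hbr : b <+: r) :
    a ++ b ∈ (Finset.Icc 1 k).image (fun m => (l.drop (l.length - m) ++ r).take k) := by
  rw [length_append] at hab
  refine Finset.mem_image.2 ⟨a.length, ?_, ?_⟩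
  · have := length_pos_iff.2 ha
    rw [Finset.mem_Icc]
    omega
  · rw [← suffix_iff_eq_drop.1 hal, take_append, take_of_length_le (by omega), ← hab,
      Nat.add_sub_cancel_left, ← prefix_iff_eq_take.1 hbr]

theorem infix_flatten_cases {k : ℕ} (hk : 0 < k) {u : List α} (hu : u.length = k) :
    ∀ {L : List (List α)}, u <:+: L.flatten →
      (∃ l ∈ L, u <:+: l ∧ k < l.length) ∨ u ∈ crossingWindows k L
  | [], h => by simp [eq_nil_of_infix_nil h] at hu; omega
  | l :: L, h => by
    have of_infix_tail (h' : u <:+: L.flatten) :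
        (∃ l' ∈ l :: L, u <:+: l' ∧ k < l'.length) ∨ u ∈ crossingWindows k (l :: L) :=
      (infix_flatten_cases hk hu h').imp (fun ⟨l', hl', h⟩ => ⟨l', mem_cons_of_mem _ hl', h⟩)
        (Finset.mem_union_right _)
    rw [flatten_cons, infix_append_iff] at h
    obtain hl | hL | ⟨a, b, rfl, hal, hbr⟩ := h
    · by_cases hlen : k < l.length
      · exact .inl ⟨l, mem_cons_self, hl, hlen⟩
      obtain rfl : u = l := hl.eq_of_length (by have := hl.length_le; omega)
      refine .inr (Finset.mem_union_left _ ?_)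
      simpa using mem_image_of_suffix_append_prefix (by simpa using hu)
        (ne_nil_of_length_pos (hu ▸ hk)) (suffix_refl u) (nil_prefix (l := L.flatten))
    · exact of_infix_tail hL
    · rcases eq_or_ne a [] with rfl | ha
      · exact of_infix_tail hbr.isInfix
      · exact .inr (Finset.mem_union_left _ (mem_image_of_suffix_append_prefix hu ha hal hbr))

end List

namespace SLP

variable {α : Type}

def expand (G : SLP α) : α ⊕ Fin G.n → List α
  | .inl a => [a]
  | .inr j => G.valAux j

theorem valAux_eq_flatten (G : SLP α) (i : Fin G.n) :
    G.valAux i = ((G.rhs i).map G.expand).flatten := by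
  rw [valAux, List.flatMap_def]
  conv_rhs => rw [← List.attach_map_subtype_val (G.rhs i), List.map_map]
  congr 1
  exact List.map_congr_left fun ⟨x, _⟩ _ => by cases x <;> rfl

def ofWord (w : List α) (hw : w ≠ []) : SLP α where
  n := 1
  rhs _ := w.map .inl
  rhs_ne _ := by simpa using hw
  acyc _ _ h := by simp at h
  start := 0

theorem val_ofWord (w : List α) (hw : w ≠ []) : (ofWord w hw).val = w := by
  rw [val, valAux_eq_flatten]
  simp only [ofWord, List.map_map]
  exact List.flatMap_singleton' w

variable [DecidableEq α]

def crossingWindows (G : SLP α) (k : ℕ) : Finset (List α) :=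
  Finset.univ.biUnion fun i => List.crossingWindows k ((G.rhs i).map G.expand)

theorem card_crossingWindows_le (G : SLP α) (k : ℕ) :
    (G.crossingWindows k).card ≤ G.size * k := by
  calc (G.crossingWindows k).card ≤ ∑ i, (List.crossingWindows k ((G.rhs i).map G.expand)).card :=
        Finset.card_biUnion_le
    _ ≤ ∑ i, (G.rhs i).length * k := Finset.sum_le_sum fun i _ => by
        simpa using List.card_crossingWindows_le k ((G.rhs i).map G.expand)
    _ = G.size * k := by rw [size, Finset.sum_mul]

theorem mem_crossingWindows_of_infix_valAux (G : SLP α) {k : ℕ} (hk : 0 < k) {u : List α}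
    (hu : u.length = k) (i : Fin G.n) (h : u <:+: G.valAux i) : u ∈ G.crossingWindows k := by
  rw [valAux_eq_flatten] at h
  obtain ⟨_, hx, hux, hlen⟩ | hcross := List.infix_flatten_cases hk hu h
  · obtain ⟨x, hxrhs, rfl⟩ := List.mem_map.1 hx
    cases x with
    | inl a => simp only [expand, List.length_singleton] at hlen; omega
    | inr j => exact G.mem_crossingWindows_of_infix_valAux hk hu j hux
  · exact Finset.mem_biUnion.2 ⟨i, Finset.mem_univ i, hcross⟩
termination_by (i : ℕ)
decreasing_by exact G.acyc i j hxrhs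

theorem card_factors_le_size_mul (G : SLP α) {k : ℕ} (hk : 0 < k) :
    (((G.val.tails.map (fun t => t.take k)).toFinset).filter (fun v => v.length = k)).card
      ≤ G.size * k := by
  refine (Finset.card_le_card fun v hv => ?_).trans (G.card_crossingWindows_le k)
  simp only [Finset.mem_filter, List.mem_toFinset, List.mem_map, List.mem_tails] at hv
  obtain ⟨⟨t, ht, rfl⟩, hlen⟩ := hv
  exact G.mem_crossingWindows_of_infix_valAux hk hlen G.start
    ((List.take_prefix k t).isInfix.trans ht.isInfix)

end SLP

/-- A word `w` has at most `g w * k` distinct factors of length `k ≥ 1`.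
Every factor of length `k` arises as `t.take k` for some tail `t` of `w`. -/
theorem factors_le {α : Type} [DecidableEq α] (w : List α) (hw : w ≠ []) (k : ℕ) (hk : 1 ≤ k) :
    (((w.tails.map (fun t => t.take k)).toFinset).filter (fun v => v.length = k)).card
      ≤ g w * k := by
  have hne : { s | ∃ G : SLP α, G.size = s ∧ G.val = w }.Nonempty :=
    ⟨_, SLP.ofWord w hw, rfl, SLP.val_ofWord w hw⟩
  obtain ⟨G, hsize, rfl⟩ := Nat.sInf_mem hne
  exact (G.card_factors_le_size_mul hk).trans_eq (by rw [hsize]; rfl)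
end

section
/- For every word w over an alphabet of size σ ≥ 2 of length n ≥ 2, there exists an SLP producing w of size at most C · n·log σ / log n for some absolute constant C. -/
/-!
Cut `w` into blocks of length `b = ⌊log_{σ⁴} n⌋`, so that `σ^b ≤ n^{1/4}` and `b ≍ log n / log σ`.
A two-level SLP has one rule for each of the `σ^b` words of length `b` (total size `σ^b · b`, which
is `O(n^{3/4})`) and a start rule listing the `n / b` blocks followed by the fewer than `b`
leftover letters, which costs `O(n log σ / log n)`. When `n < σ⁴` the word itself is already
short enough, since then `log n < 4 log σ`.
-/

section Blocks

variable {α : Type}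

/-- Positions past the end of `w` read as `d`; only blocks lying inside `w` are ever used. -/
def block (w : List α) (d : α) (b j : ℕ) : Fin b → α := fun t => w.getD (j * b + t) d

theorem ofFn_block {w : List α} {d : α} {b j : ℕ} (h : j * b + b ≤ w.length) :
    List.ofFn (block w d b j) = (w.drop (j * b)).take b := by
  apply List.ext_getElem
  · simp only [List.length_ofFn, List.length_take, List.length_drop]
    omega
  · intro i h₁ _
    simp only [List.length_ofFn] at h₁
    simp [block, List.getElem?_eq_getElem (show j * b + i < w.length by omega)]

theorem flatMap_range_ofFn_block {w : List α} {d : α} {b k : ℕ} (hk : k * b ≤ w.length) :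
    (List.range k).flatMap (fun j => List.ofFn (block w d b j)) = w.take (k * b) := by
  induction k with
  | zero => simp
  | succ k ih =>
    rw [Nat.succ_mul] at hk ⊢
    rw [List.range_succ, List.flatMap_append, ih (by omega), List.flatMap_singleton, ofFn_block hk,
      List.take_add]

end Blocks

namespace SLP

variable {α : Type}

theorem valAux_eq (G : SLP α) (i : Fin G.n) :
    G.valAux i = (G.rhs i).flatMap (Sum.elim (fun a => [a]) G.valAux) := by
  rw [valAux]
  conv_rhs => rw [← List.attach_map_subtype_val (G.rhs i), List.flatMap_map]
  congr 1
  funext ⟨s, _⟩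
  cases s <;> rfl

/-- Nonterminal `i.castSucc` derives `dict i` directly; the start symbol `Fin.last m` has right-hand
side `top`, in which `inr i` stands for `dict i`. It is an `abbrev` so that `(twoLevel …).n`
reduces to `m + 1` and terms indexed by `Fin (m + 1)` can be rewritten in place. -/
abbrev twoLevel {m : ℕ} (dict : Fin m → List α) (hdict : ∀ i, dict i ≠ [])
    (top : List (α ⊕ Fin m)) (htop : top ≠ []) : SLP α where
  n := m + 1
  rhs := Fin.lastCases (top.map (Sum.map id Fin.castSucc)) fun i => (dict i).map Sum.inl
  rhs_ne i := by
    cases i using Fin.lastCases <;> simp [htop, hdict]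
  acyc i j hj := by
    cases i using Fin.lastCases with
    | last =>
      obtain ⟨k, -, rfl⟩ : ∃ k, Sum.inr k ∈ top ∧ k.castSucc = j := by simpa using hj
      simp
    | cast i => simp at hj
  start := Fin.last m

variable {m : ℕ} {dict : Fin m → List α} {hdict : ∀ i, dict i ≠ []}
  {top : List (α ⊕ Fin m)} {htop : top ≠ []}

theorem valAux_twoLevel_castSucc (i : Fin m) :
    (twoLevel dict hdict top htop).valAux i.castSucc = dict i :=
  (valAux_eq _ _).trans (by simp [twoLevel, List.flatMap_map])

theorem val_twoLevel :
    (twoLevel dict hdict top htop).val = top.flatMap (Sum.elim (fun a => [a]) dict) := by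
  rw [val, valAux_eq]
  simp only [Fin.lastCases_last, List.flatMap_map]
  congr 1
  funext x
  cases x
  · rfl
  · exact valAux_twoLevel_castSucc _

theorem size_twoLevel :
    (twoLevel dict hdict top htop).size = ∑ i, (dict i).length + top.length := by
  refine (Fin.sum_univ_castSucc _).trans ?_
  simp [twoLevel]

theorem exists_val_eq_size_eq_length {w : List α} (hw : w ≠ []) :
    ∃ G : SLP α, G.val = w ∧ G.size = w.length :=
  ⟨twoLevel Fin.elim0 nofun (w.map Sum.inl) (by simpa),
    by simp [val_twoLevel, List.flatMap_map], by simp [size_twoLevel]⟩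

theorem exists_val_eq_size_le_blocks [Fintype α] {w : List α} (hw : w ≠ []) {b : ℕ} (hb : 0 < b) :
    ∃ G : SLP α, G.val = w ∧ G.size ≤ Fintype.card α ^ b * b + w.length / b + b := by
  obtain ⟨d⟩ : Nonempty α := ⟨w.head hw⟩
  let e := Fintype.equivFin (Fin b → α)
  set k := w.length / b
  have hkb : k * b ≤ w.length := Nat.div_mul_le_self _ _
  have htop : (List.range k).map (fun j => Sum.inr (e (block w d b j))) ++
      (w.drop (k * b)).map Sum.inl ≠ [] := by
    simp only [ne_eq, List.append_eq_nil_iff, List.map_eq_nil_iff, List.range_eq_nil,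
      List.drop_eq_nil_iff, not_and]
    intro hk0 hle
    rw [hk0, zero_mul, Nat.le_zero, List.length_eq_zero_iff] at hle
    exact hw hle
  refine ⟨twoLevel (fun i => List.ofFn (e.symm i))
    (fun _ => List.ofFn_eq_nil_iff.not.mpr hb.ne') _ htop, ?_, ?_⟩
  · rw [val_twoLevel, List.flatMap_append, List.flatMap_map, List.flatMap_map]
    simp only [Sum.elim_inl, Sum.elim_inr, List.flatMap_singleton', Equiv.symm_apply_apply]
    rw [flatMap_range_ofFn_block hkb, List.take_append_drop]
  · rw [size_twoLevel]
    have hleftover : w.length < k * b + b := Nat.lt_div_mul_add hb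
    simp only [List.length_ofFn, Finset.sum_const, Finset.card_univ, Fintype.card_fun,
      Fintype.card_fin, smul_eq_mul, List.length_append, List.length_map, List.length_range,
      List.length_drop]
    omega

end SLP

section Estimates

open Real

theorem natCast_mul_log_le_log_of_pow_le {σ n k : ℕ} (hσ : 0 < σ) (h : σ ^ k ≤ n) :
    k * log σ ≤ log n := by
  rw [← log_pow]
  exact log_le_log (by positivity) (by exact_mod_cast h)

theorem log_le_natCast_mul_log_of_le_pow {σ n k : ℕ} (hn : 0 < n) (h : n ≤ σ ^ k) :
    log n ≤ k * log σ := by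
  rw [← log_pow]
  exact log_le_log (by positivity) (by exact_mod_cast h)

theorem one_half_le_log {σ : ℕ} (hσ : 2 ≤ σ) : 1 / 2 ≤ log σ :=
  (by linarith [log_two_gt_d9] : (1 : ℝ) / 2 ≤ log 2).trans
    (log_le_log two_pos (by exact_mod_cast hσ))

theorem block_cost_mul_log_le {σ n b : ℕ} (hσ : 2 ≤ σ) (hb : 0 < b)
    (hlow : σ ^ (4 * b) ≤ n) (hhigh : n ≤ σ ^ (4 * (b + 1))) :
    ((σ ^ b * b + n / b + b : ℕ) : ℝ) * log n ≤ 40 * n * log σ := by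
  have hn : 0 < n := (Nat.pow_pos (by omega)).trans_le hlow
  have hn' : (0 : ℝ) < n := by exact_mod_cast hn
  have hL := one_half_le_log hσ
  have hlow' := natCast_mul_log_le_log_of_pow_le (by omega) hlow
  have hhigh' := log_le_natCast_mul_log_of_le_pow hn hhigh
  push_cast at hlow' hhigh'
  -- With `q = n^{1/4}`, every term is bounded by a polynomial of degree at most 4 in `q`.
  set q := (n : ℝ) ^ (4⁻¹ : ℝ)
  have hq4 : q ^ 4 = n := by simpa using rpow_inv_natCast_pow (n := 4) hn'.le (by norm_num)
  have hq1 : 1 ≤ q := one_le_rpow (by exact_mod_cast hn) (by norm_num)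
  have hlogq : log n ≤ 4 * q :=
    (log_le_rpow_div hn'.le (by norm_num : (0 : ℝ) < 4⁻¹)).trans_eq (by ring)
  have hlog8 : log n ≤ 8 * b * log σ := by
    have hb1 : (1 : ℝ) ≤ b := by exact_mod_cast hb
    nlinarith
  have hσb : (σ : ℝ) ^ b ≤ q := by
    refine (pow_le_pow_iff_left₀ (by positivity) (by positivity) (by norm_num : 4 ≠ 0)).mp ?_
    rw [hq4, ← pow_mul, mul_comm]
    exact_mod_cast hlow
  have hb2q : (b : ℝ) ≤ 2 * q := by nlinarith
  have hdict : (σ : ℝ) ^ b * b * log n ≤ 16 * n * log σ := by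
    calc (σ : ℝ) ^ b * b * log n ≤ q * (2 * q) * (4 * q) := by gcongr
      _ ≤ 8 * q ^ 4 := by nlinarith [pow_le_pow_right₀ hq1 (show 3 ≤ 4 by norm_num)]
      _ ≤ 16 * n * log σ := by nlinarith
  have hstart : ((n / b : ℕ) : ℝ) * log n ≤ 8 * n * log σ := by
    calc ((n / b : ℕ) : ℝ) * log n ≤ n / b * (8 * b * log σ) := by
          gcongr
          exact Nat.cast_div_le
      _ = 8 * n * log σ := by field_simp
  have hleftover : (b : ℝ) * log n ≤ 16 * n * log σ := by
    calc (b : ℝ) * log n ≤ 2 * q * (4 * q) := by gcongr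
      _ ≤ 8 * q ^ 4 := by nlinarith [pow_le_pow_right₀ hq1 (show 2 ≤ 4 by norm_num)]
      _ ≤ 16 * n * log σ := by nlinarith
  push_cast
  linarith

end Estimates

/-- Every word of length `n ≥ 2` over an alphabet of size `σ ≥ 2` has an SLP of size
at most `C · n·log σ / log n` for an absolute constant `C`. -/
theorem slp_n_div_log :
    ∃ C : ℝ, ∀ (α : Type) (inst : Fintype α) (w : List α),
      2 ≤ @Fintype.card α inst → 2 ≤ w.length →
      ∃ G : SLP α, G.val = w ∧
        (G.size : ℝ) ≤ C * w.length * Real.log (@Fintype.card α inst) / Real.log w.length := by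
  refine ⟨40, fun α inst w hσ hn => ?_⟩
  have hw : w ≠ [] := List.ne_nil_of_length_pos (by omega)
  have hlogn : 0 < Real.log w.length := Real.log_pos (by exact_mod_cast hn)
  suffices ∃ G : SLP α, G.val = w ∧
      (G.size : ℝ) * Real.log w.length ≤ 40 * w.length * Real.log (Fintype.card α) by
    simpa only [le_div_iff₀ hlogn] using this
  by_cases hsmall : w.length < Fintype.card α ^ 4
  · obtain ⟨G, hval, hsize⟩ := SLP.exists_val_eq_size_eq_length hw
    refine ⟨G, hval, ?_⟩
    have hlog := log_le_natCast_mul_log_of_le_pow (k := 4) (by omega) hsmall.le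
    have hL := one_half_le_log hσ
    rw [hsize]
    push_cast at hlog
    nlinarith
  · set b := Nat.log (Fintype.card α ^ 4) w.length
    have hpow : 1 < Fintype.card α ^ 4 := Nat.one_lt_pow (by norm_num) hσ
    have hb : 0 < b := Nat.log_pos hpow (not_lt.mp hsmall)
    obtain ⟨G, hval, hsize⟩ := SLP.exists_val_eq_size_le_blocks hw hb
    refine ⟨G, hval, le_trans ?_ (block_cost_mul_log_le hσ hb ?_ ?_)⟩
    · exact mul_le_mul_of_nonneg_right (by exact_mod_cast hsize) (Real.log_natCast_nonneg _)
    · rw [pow_mul]; exact Nat.pow_log_le_self _ (by omega)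
    · rw [pow_mul]; exact (Nat.lt_pow_succ_log_self hpow _).le
end

section
/- Every word w over an alphabet of size k such that no length-2 factor of w occurs 3 times without overlap and no length-3 factor of w occurs twice without overlap satisfies |w| ≤ 2k² + 2k + 1. -/
/-- `OccursWithoutOverlap v w m` : `v` has (at least) `m` pairwise
non-overlapping occurrences in `w`, witnessed by a decomposition
`w = g₀ v g₁ v ⋯ v gₘ`. -/
def OccursWithoutOverlap {α : Type} (v w : List α) (m : ℕ) : Prop :=
  ∃ gs : List (List α), gs.length = m + 1 ∧ w = List.intercalate v gs


/-!
Every position `i + 1 < |w|` starts an occurrence of a length-2 factor `ab`. Among five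
occurrences of `aa`, the first, third and fifth are pairwise disjoint; occurrences of `ab` with
`a ≠ b` never overlap, so any three are disjoint. Hence, if no length-2 factor has three
disjoint occurrences, `aa` occurs at most 4 times and `ab` at most twice; summing over the `k²`
pairs gives `|w| - 1 ≤ 4k + 2k(k - 1)`.
-/

namespace OccursWithoutOverlap

variable {α : Type} {v w : List α} {m : ℕ}

theorem zero (v w : List α) : OccursWithoutOverlap v w 0 :=
  ⟨[w], rfl, by simp⟩

theorem append_left (h : OccursWithoutOverlap v w m) (u : List α) :
    OccursWithoutOverlap v (u ++ w) m := by
  obtain ⟨_ | ⟨g, _ | ⟨g', gs⟩⟩, hlen, rfl⟩ := h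
  · simp at hlen
  · exact ⟨[u ++ g], hlen, by simp⟩
  · refine ⟨(u ++ g) :: g' :: gs, hlen, ?_⟩
    simp only [List.intercalate_cons_cons, List.append_assoc]

theorem factor_append (h : OccursWithoutOverlap v w m) :
    OccursWithoutOverlap v (v ++ w) (m + 1) := by
  obtain ⟨_ | ⟨g, gs⟩, hlen, rfl⟩ := h
  · simp at hlen
  · exact ⟨[] :: g :: gs, by simpa using hlen, by simp [List.intercalate_cons_cons]⟩

theorem drop_of_isPrefix_drop {i j : ℕ} (h : OccursWithoutOverlap v (w.drop j) m)
    (hi : v <+: w.drop i) (hij : i + v.length ≤ j) :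
    OccursWithoutOverlap v (w.drop i) (m + 1) := by
  have hsplit : w.drop (i + v.length) =
      (w.drop (i + v.length)).take (j - (i + v.length)) ++ w.drop j := by
    conv_lhs => rw [← List.take_append_drop (j - (i + v.length)) (w.drop (i + v.length))]
    rw [List.drop_drop, Nat.add_sub_cancel' hij]
  rw [← List.prefix_iff_eq_append.mp hi, List.drop_drop, hsplit]
  exact (h.append_left _).factor_append

theorem three_of_isPrefix_drop {i j l : ℕ} (hij : i + v.length ≤ j) (hjl : j + v.length ≤ l)
    (hi : v <+: w.drop i) (hj : v <+: w.drop j) (hl : v <+: w.drop l) :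
    OccursWithoutOverlap v w 3 := by
  have h := (((zero v (w.drop (l + v.length))).drop_of_isPrefix_drop hl le_rfl)
    |>.drop_of_isPrefix_drop hj hjl).drop_of_isPrefix_drop hi hij
  simpa using h.append_left (w.take i)

end OccursWithoutOverlap

namespace Finset

theorem exists_mem_card_le_card_filter_add (S : Finset ℕ) (hS : S.Nonempty) (d : ℕ) :
    ∃ m ∈ S, S.card ≤ (S.filter (m + d ≤ ·)).card + d := by
  refine ⟨S.min' hS, S.min'_mem hS, ?_⟩
  have hcover : S ⊆ S.filter (S.min' hS + d ≤ ·) ∪ Ico (S.min' hS) (S.min' hS + d) := by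
    intro s hs
    rw [mem_union, mem_filter, mem_Ico]
    by_cases hs' : S.min' hS + d ≤ s
    exacts [.inl ⟨hs, hs'⟩, .inr ⟨S.min'_le s hs, by omega⟩]
  calc S.card ≤ _ := card_le_card hcover
    _ ≤ _ := card_union_le _ _
    _ = _ := by rw [Nat.card_Ico]; omega

theorem exists_add_le_add_le_of_two_mul_add_one_le_card (S : Finset ℕ) (d : ℕ)
    (hS : 2 * d + 1 ≤ S.card) : ∃ i ∈ S, ∃ j ∈ S, ∃ l ∈ S, i + d ≤ j ∧ j + d ≤ l := by
  obtain ⟨i, hi, hSi⟩ := S.exists_mem_card_le_card_filter_add (card_pos.mp (by omega)) d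
  set T := S.filter (i + d ≤ ·)
  obtain ⟨j, hj, hTj⟩ := T.exists_mem_card_le_card_filter_add (card_pos.mp (by omega)) d
  obtain ⟨l, hl⟩ := card_pos.mp (show 0 < (T.filter (j + d ≤ ·)).card by omega)
  simp only [T, mem_filter] at hj hl
  exact ⟨i, hi, j, hj.1, l, hl.1.1, hj.2, hl.2⟩

end Finset

section PairPositions

variable {α : Type} [DecidableEq α] {w : List α} {a b : α} {i j l : ℕ}

def pairPositions (w : List α) (a b : α) : Finset ℕ :=
  (Finset.range w.length).filter fun i => [a, b] <+: w.drop i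

theorem mem_pairPositions : i ∈ pairPositions w a b ↔ i < w.length ∧ [a, b] <+: w.drop i := by
  rw [pairPositions, Finset.mem_filter, Finset.mem_range]

theorem length_sub_one_le_sum_card_pairPositions [Fintype α] (w : List α) :
    w.length - 1 ≤ ∑ p : α × α, (pairPositions w p.1 p.2).card := by
  refine le_trans ?_ Finset.card_biUnion_le
  rw [← Finset.card_range (w.length - 1)]
  refine Finset.card_le_card fun i hi => ?_
  have hi1 : i + 1 < w.length := by rw [Finset.mem_range] at hi; omega
  have hi0 : i < w.length := by omega
  refine Finset.mem_biUnion.mpr ⟨(w[i], w[i + 1]), Finset.mem_univ _,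
    mem_pairPositions.mpr ⟨hi0, ?_⟩⟩
  rw [List.drop_eq_getElem_cons hi0, List.drop_eq_getElem_cons hi1]
  exact List.prefix_append _ _

theorem add_two_le_of_mem_pairPositions (hab : a ≠ b) (hi : i ∈ pairPositions w a b)
    (hj : j ∈ pairPositions w a b) (hij : i < j) : i + 2 ≤ j := by
  obtain rfl | hij := Nat.succ_le_of_lt hij |>.eq_or_lt
  · obtain ⟨t, ht⟩ := (mem_pairPositions.mp hi).2
    have hpre := (mem_pairPositions.mp hj).2
    rw [← List.tail_drop, ← ht] at hpre
    exact absurd (List.cons_prefix_cons.mp hpre).1 hab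
  · exact hij

theorem OccursWithoutOverlap.three_of_mem_pairPositions (hij : i + 2 ≤ j) (hjl : j + 2 ≤ l)
    (hi : i ∈ pairPositions w a b) (hj : j ∈ pairPositions w a b)
    (hl : l ∈ pairPositions w a b) : OccursWithoutOverlap [a, b] w 3 :=
  OccursWithoutOverlap.three_of_isPrefix_drop hij hjl (mem_pairPositions.mp hi).2
    (mem_pairPositions.mp hj).2 (mem_pairPositions.mp hl).2

theorem card_pairPositions_le (h : ¬ OccursWithoutOverlap [a, b] w 3) :
    (pairPositions w a b).card ≤ if a = b then 4 else 2 := by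
  by_contra! hcard
  split_ifs at hcard with hab
  · obtain ⟨i, hi, j, hj, l, hl, hij, hjl⟩ :=
      Finset.exists_add_le_add_le_of_two_mul_add_one_le_card _ 2 hcard
    exact h (.three_of_mem_pairPositions hij hjl hi hj hl)
  · obtain ⟨i, hi, j, hj, l, hl, hij, hjl⟩ :=
      Finset.exists_add_le_add_le_of_two_mul_add_one_le_card _ 1 hcard
    exact h (.three_of_mem_pairPositions (add_two_le_of_mem_pairPositions hab hi hj hij)
      (add_two_le_of_mem_pairPositions hab hj hl hjl) hi hj hl)

end PairPositions

theorem incompressible_length_bound_general {α : Type} (inst : Fintype α) (k : ℕ)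
    (hcard : @Fintype.card α inst = k) (w : List α)
    (h2 : ¬ ∃ v : List α, v.length = 2 ∧ OccursWithoutOverlap v w 3) :
    w.length ≤ 2 * k ^ 2 + 2 * k + 1 := by
  classical
  have hsum : ∑ p : α × α, (if p.1 = p.2 then 4 else 2) = 2 * k ^ 2 + 2 * k := by
    have hsplit : ∀ x y : α, (if x = y then 4 else 2) = 2 + if x = y then 2 else 0 := by
      intro x y
      split_ifs <;> rfl
    simp only [hsplit, Finset.sum_add_distrib, Finset.sum_const, Finset.card_univ,
      Fintype.card_prod, hcard, smul_eq_mul, Fintype.sum_prod_type, Finset.sum_ite_eq,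
      Finset.mem_univ, ↓reduceIte]
    ring
  have := (length_sub_one_le_sum_card_pairPositions w).trans
    (Finset.sum_le_sum fun p _ => card_pairPositions_le fun h => h2 ⟨[p.1, p.2], rfl, h⟩)
  omega

/-- A word over a `k`-letter alphabet in which no length-2 factor occurs 3 times
without overlap and no length-3 factor occurs twice without overlap has length
at most `2k² + 2k + 1`. -/
theorem incompressible_length_bound {α : Type} (inst : Fintype α) (k : ℕ)
    (hcard : @Fintype.card α inst = k) (w : List α)
    (h2 : ¬ ∃ v : List α, v.length = 2 ∧ OccursWithoutOverlap v w 3)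
    (h3 : ¬ ∃ v : List α, v.length = 3 ∧ OccursWithoutOverlap v w 2) :
    w.length ≤ 2 * k ^ 2 + 2 * k + 1 :=
  incompressible_length_bound_general inst k hcard w h2
end

section
/- For every k ≥ 1 there exists a word w over an alphabet of size k with |w| = 2k² + 2k + 1 such that no length-2 factor of w occurs 3 times without overlap and no length-3 factor of w occurs twice without overlap. Concretely, w = (∏_{i=1}^{k} a_{k-i+1}^5) · ∏_{i=1}^{k-1} ((∏_{j=i+2}^{k} (a_j a_i)²) a_{i+1} a_i a_{i+1}) over the alphabet {a_1,…,a_k} has this property. -/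
/-- The concrete word `w_k` over the alphabet `{1,…,k}` (letter `a_i` is `i : ℕ`):
`w_k = (∏_{i=1}^{k} a_{k-i+1}^5) · ∏_{i=1}^{k-1} ((∏_{j=i+2}^{k} (a_j a_i)²) a_{i+1} a_i a_{i+1})`. -/
def wk (k : ℕ) : List ℕ :=
  ((List.range k).map (fun i => List.replicate 5 (k - i))).flatten ++
  ((List.range (k - 1)).map (fun i' =>
      let i := i' + 1
      (((List.range (k - (i + 1))).map (fun j' =>
          let j := j' + i + 2
          [j, i, j, i])).flatten) ++ [i + 1, i, i + 1])).flatten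

section Occurrences

variable {α : Type} {v w : List α} {m : ℕ}

theorem OccursWithoutOverlap.exists_positions (h : OccursWithoutOverlap v w m) :
    ∃ ps : List ℕ, ps.length = m ∧ ps.Pairwise (fun p q => p + v.length ≤ q) ∧
      ∀ p ∈ ps, v <+: w.drop p := by
  obtain ⟨gs, hlen, rfl⟩ := h
  induction gs generalizing m with
  | nil => simp at hlen
  | cons g rest ih =>
    match rest, m with
    | [], 0 => exact ⟨[], rfl, .nil, by simp⟩
    | g' :: rest', m' + 1 =>
      obtain ⟨ps, hps, hsep, hocc⟩ := ih (m := m') (by simpa using hlen)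
      refine ⟨g.length :: ps.map (g.length + v.length + ·), by simp [hps], ?_, ?_⟩
      · refine List.Pairwise.cons (fun q hq => ?_) (List.pairwise_map.2 (hsep.imp (by omega)))
        obtain ⟨p, -, rfl⟩ := List.mem_map.1 hq
        omega
      · simp only [List.mem_cons, List.mem_map, List.intercalate_cons_cons]
        rintro _ (rfl | ⟨p, hp, rfl⟩)
        · simp
        · rw [← List.drop_drop, List.drop_left' (by simp)]
          exact hocc p hp
    | [], _ + 1 | _ :: _, 0 => simp at hlen

theorem not_occursWithoutOverlap_of_windows (hv : v ≠ []) (S : Finset ℤ) (hS : S.card < m)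
    (hwin : ∀ p : ℕ, v <+: w.drop p → ∃ s ∈ S, s ≤ p ∧ p < s + v.length) :
    ¬ OccursWithoutOverlap v w m := by
  classical
  intro h
  obtain ⟨ps, rfl, hsep, hocc⟩ := h.exists_positions
  have hv0 : 0 < v.length := List.length_pos_iff.2 hv
  have hnodup : ps.Nodup := (hsep.imp (by omega : ∀ {p q : ℕ}, p + v.length ≤ q → p < q)).nodup
  have : Std.Symm (fun p q : ℕ => p + v.length ≤ q ∨ q + v.length ≤ p) := ⟨fun _ _ => Or.symm⟩
  have hapart : ∀ p ∈ ps, ∀ q ∈ ps, p ≠ q → p + v.length ≤ q ∨ q + v.length ≤ p :=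
    (hsep.imp Or.inl).forall
  choose! window hwindowS hwindow using
    fun p (hp : p ∈ ps.toFinset) => hwin p (hocc p (by simpa using hp))
  obtain ⟨p, hp, q, hq, hpq, heq⟩ := Finset.exists_ne_map_eq_of_card_lt_of_maps_to
    (by rwa [List.toFinset_card_of_nodup hnodup]) (f := window) hwindowS
  obtain ⟨hp₁, hp₂⟩ := hwindow p hp
  obtain ⟨hq₁, hq₂⟩ := hwindow q hq
  rcases hapart p (by simpa using hp) q (by simpa using hq) hpq with h | h <;> omega

end Occurrences

section Chunks

variable {α : Type}

def chunkStart (L : List (List α)) (t : ℕ) : ℕ := (L.take t).flatten.length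

theorem chunkStart_succ (L : List (List α)) {t : ℕ} (ht : t < L.length) :
    chunkStart L (t + 1) = chunkStart L t + L[t].length := by
  rw [chunkStart, chunkStart, List.take_add_one, List.getElem?_eq_getElem ht]
  simp only [Option.toList_some, List.flatten_append, List.length_append, List.flatten_singleton]

theorem exists_chunk_of_prefix_drop {L : List (List α)} {v : List α} {p : ℕ} (hv : v ≠ [])
    (hL : ∀ c ∈ L, v.length ≤ c.length) (h : v <+: L.flatten.drop p) :
    ∃ t, ∃ ht : t < L.length, ∃ o < L[t].length,
      p = chunkStart L t + o ∧ v <+: (L[t] ++ L.getD (t + 1) []).drop o := by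
  induction L generalizing p with
  | nil => simp_all
  | cons c L ih =>
    rw [List.flatten_cons, List.drop_append] at h
    by_cases hp : p < c.length
    · refine ⟨0, by simp, p, hp, by simp [chunkStart], ?_⟩
      rw [Nat.sub_eq_zero_of_le hp.le, List.drop_zero] at h
      rcases L with _ | ⟨c', L⟩
      · simpa using h
      · rw [List.flatten_cons, ← List.append_assoc] at h
        have hlen := hL c' (by simp)
        simp only [List.getElem_cons_zero, Nat.zero_add, List.getD_cons_succ, List.getD_cons_zero,
          List.drop_append, Nat.sub_eq_zero_of_le hp.le, List.drop_zero]
        refine List.prefix_of_prefix_length_le h (List.prefix_append _ _) ?_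
        simp only [List.length_append, List.length_drop]
        omega
    · obtain ⟨t, ht, o, ho, hpt, hv'⟩ := ih (fun c' hc' => hL c' (by simp [hc']))
        (p := p - c.length) (by rwa [List.drop_eq_nil_of_le (by omega), List.nil_append] at h)
      refine ⟨t + 1, by simpa using ht, o, by simpa using ho, ?_, by simpa using hv'⟩
      simp only [chunkStart, List.take_succ_cons, List.flatten_cons, List.length_append] at hpt ⊢
      omega

/-- An anchor `x = (c₀, d)` stands for the window of `n` positions starting `d` letters after the
start of the chunk `c₀`; `InWindow n c c' o x` says that position `o` of a chunk `c` followed by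
`c'` lies in that window. -/
def InWindow (n : ℕ) (c c' : List α) (o : ℕ) (x : List α × ℤ) : Prop :=
  (x.1 = c ∧ x.2 ≤ o ∧ o < x.2 + n) ∨
    (x.1 = c' ∧ c' ≠ [] ∧ x.2 + c.length ≤ o ∧ o < x.2 + c.length + n)

variable [DecidableEq α]

def windowStart (L : List (List α)) (x : List α × ℤ) : ℤ := chunkStart L (L.idxOf x.1) + x.2

theorem InWindow.windowStart_le {L : List (List α)} (hL : L.Nodup) {n t o : ℕ}
    {x : List α × ℤ} (ht : t < L.length) (h : InWindow n L[t] (L.getD (t + 1) []) o x) :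
    windowStart L x ≤ chunkStart L t + o ∧ (chunkStart L t + o : ℤ) < windowStart L x + n := by
  rcases h with ⟨hx, h₁, h₂⟩ | ⟨hx, hne, h₁, h₂⟩
  · rw [windowStart, hx, hL.idxOf_getElem]
    omega
  · have ht' : t + 1 < L.length := by
      by_contra h
      exact hne (List.getD_eq_default _ _ (by omega))
    rw [List.getD_eq_getElem _ _ ht'] at hx
    rw [windowStart, hx, hL.idxOf_getElem, chunkStart_succ L ht]
    push_cast
    omega

theorem not_occursWithoutOverlap_of_forall_inWindow {L : List (List α)} {v : List α} {m : ℕ}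
    {A : List (List α × ℤ)} (hL : L.Nodup) (hv : v ≠ []) (hlen : ∀ c ∈ L, v.length ≤ c.length)
    (hA : A.length < m)
    (hwin : ∀ t (ht : t < L.length), ∀ o < L[t].length, v <+: (L[t] ++ L.getD (t + 1) []).drop o →
      ∃ x ∈ A, InWindow v.length L[t] (L.getD (t + 1) []) o x) :
    ¬ OccursWithoutOverlap v L.flatten m := by
  refine not_occursWithoutOverlap_of_windows hv (A.map (windowStart L)).toFinset
    ((List.toFinset_card_le _).trans_lt (by simpa using hA)) fun p hp => ?_
  obtain ⟨t, ht, o, ho, rfl, hpre⟩ := exists_chunk_of_prefix_drop hv hlen hp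
  obtain ⟨x, hxA, hx⟩ := hwin t ht o ho hpre
  exact ⟨windowStart L x, List.mem_toFinset.2 (List.mem_map_of_mem hxA),
    hx.windowStart_le hL ht⟩

end Chunks

namespace Wk

def pow5 (m : ℕ) : List ℕ := List.replicate 5 m
def sq (i j : ℕ) : List ℕ := [j, i, j, i]
def hinge (i : ℕ) : List ℕ := [i + 1, i, i + 1]

def block (k i : ℕ) : List (List ℕ) :=
  (List.range (k - (i + 1))).map (fun j => sq i (j + i + 2)) ++ [hinge i]

def chunks (k : ℕ) : List (List ℕ) :=
  (List.range k).map (fun i => pow5 (k - i)) ++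
    ((List.range (k - 1)).map (fun i => block k (i + 1))).flatten

theorem wk_eq_flatten_chunks (k : ℕ) : wk k = (chunks k).flatten := by
  simp only [wk, chunks, List.flatten_append, List.flatten_flatten, List.map_map]
  refine congrArg₂ _ rfl (congrArg _ (List.map_congr_left fun i _ => ?_))
  simp [Function.comp, block, sq, hinge]

/-- Holds for consecutive chunks of `chunks k`, where `[]` stands for the end of the word. -/
inductive ChunkStep (k : ℕ) : List ℕ → List ℕ → Prop
  | pow_pow (m : ℕ) : ChunkStep k (pow5 (m + 1)) (pow5 m)
  | pow_sq : ChunkStep k (pow5 1) (sq 1 3)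
  | pow_hinge : ChunkStep k (pow5 1) (hinge 1)
  | pow_nil : ChunkStep k (pow5 1) []
  | sq_sq {i j : ℕ} : i + 2 ≤ j → ChunkStep k (sq i j) (sq i (j + 1))
  | sq_hinge {i : ℕ} : i + 2 ≤ k → ChunkStep k (sq i k) (hinge i)
  | hinge_sq (i : ℕ) : ChunkStep k (hinge i) (sq (i + 1) (i + 3))
  | hinge_hinge (i : ℕ) : ChunkStep k (hinge i) (hinge (i + 1))
  | hinge_nil {i : ℕ} : i + 1 = k → ChunkStep k (hinge i) []

theorem isChain_pows (k : ℕ) :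
    ((List.range k).map (fun i => pow5 (k - i))).IsChain (ChunkStep k) := by
  rw [List.isChain_map]
  rcases k with _ | k
  · simp
  · refine (List.isChain_range_succ _ _).2 fun m hm => ?_
    rw [show k + 1 - m = k - m + 1 by omega, show k + 1 - m.succ = k - m by omega]
    exact .pow_pow _

theorem isChain_block {k i : ℕ} : (block k i).IsChain (ChunkStep k) := by
  rw [block, List.isChain_append]
  refine ⟨?_, List.isChain_singleton _, ?_⟩
  · rw [List.isChain_map]
    rcases h : k - (i + 1) with _ | n
    · simp
    · refine (List.isChain_range_succ _ _).2 fun m hm => ?_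
      rw [show m.succ + i + 2 = m + i + 2 + 1 by omega]
      exact .sq_sq (by omega)
  · intro x hx y hy
    rcases h : k - (i + 1) with _ | n
    · simp [h] at hx
    · simp only [h, List.range_succ, List.map_append, List.getLast?_append, List.map_cons,
        List.map_nil, List.getLast?_singleton, Option.some_or, Option.mem_def,
        Option.some.injEq, List.head?_cons] at hx hy
      subst hx hy
      rw [show n + i + 2 = k by omega]
      exact .sq_hinge (by omega)

theorem head?_block {k i : ℕ} :
    (block k i).head? = some (if i + 2 ≤ k then sq i (i + 2) else hinge i) := by
  rcases h : k - (i + 1) with _ | n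
  · simp [block, h, show ¬ i + 2 ≤ k by omega]
  · simp [block, h, List.range_succ_eq_map, show i + 2 ≤ k by omega]

theorem getLast?_block {k i : ℕ} : (block k i).getLast? = some (hinge i) :=
  List.getLast?_concat

theorem isChain_blocks_append_nil {k : ℕ} (hk : 1 ≤ k) :
    (((List.range (k - 1)).map (fun i => block k (i + 1))).flatten ++ [[]]).IsChain
      (ChunkStep k) := by
  rw [show [[]] = [[[]]].flatten from rfl, ← List.flatten_append,
    List.isChain_flatten (by simp [block])]
  refine ⟨?_, ?_⟩
  · simp only [List.mem_append, List.mem_map, List.mem_singleton]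
    rintro l (⟨i, -, rfl⟩ | rfl)
    · exact isChain_block
    · exact List.isChain_singleton _
  · rw [List.isChain_append]
    refine ⟨?_, List.isChain_singleton _, ?_⟩
    · rw [List.isChain_map]
      rcases h : k - 1 with _ | n
      · simp
      · refine (List.isChain_range_succ _ _).2 fun m hm x hx y hy => ?_
        simp only [getLast?_block, head?_block, Option.mem_def, Option.some.injEq] at hx hy
        subst hx hy
        split_ifs with h'
        · exact .hinge_sq _
        · exact .hinge_hinge _
    · simp only [List.getLast?_map, List.getLast?_range, List.head?_cons, Option.mem_def,
        Option.map_eq_some_iff, Option.some.injEq, forall_exists_index, and_imp]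
      rintro _ n hn rfl _ rfl x hx y hy
      simp only [getLast?_block, List.head?_cons, Option.some.injEq] at hx hy
      subst hx hy
      split_ifs at hn
      exact .hinge_nil (by simp at hn; omega)

theorem isChain_chunks_append_nil {k : ℕ} (hk : 1 ≤ k) :
    (chunks k ++ [[]]).IsChain (ChunkStep k) := by
  rw [chunks, List.append_assoc, List.isChain_append]
  refine ⟨isChain_pows k, isChain_blocks_append_nil hk, fun x hx y hy => ?_⟩
  simp only [List.getLast?_map, List.getLast?_range, Nat.pos_iff_ne_zero.1 hk, if_false,
    Option.map_some, Option.mem_def, Option.some.injEq] at hx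
  rw [← hx, show k - (k - 1) = 1 by omega]
  rcases h : k - 1 with _ | n
  · rw [h] at hy
    simp only [List.range_zero, List.map_nil, List.flatten_nil, List.nil_append,
      List.head?_cons, Option.mem_def, Option.some.injEq] at hy
    exact hy ▸ .pow_nil
  · rw [h, List.range_succ_eq_map, List.map_cons, List.flatten_cons, List.append_assoc,
      List.head?_append, head?_block, Option.some_or, Option.mem_def, Option.some.injEq] at hy
    subst hy
    split_ifs
    · exact .pow_sq
    · exact .pow_hinge

theorem ChunkStep.three_le_length {k : ℕ} {c c' : List ℕ} (h : ChunkStep k c c') :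
    3 ≤ c.length := by
  cases h <;> simp [pow5, sq, hinge]

theorem chunkStep_getElem {k t : ℕ} (hk : 1 ≤ k) (ht : t < (chunks k).length) :
    ChunkStep k (chunks k)[t] ((chunks k).getD (t + 1) []) := by
  have h := List.isChain_iff_getElem.1 (isChain_chunks_append_nil hk) t (by simp; omega)
  rw [List.getElem_append_left ht, List.getElem_append] at h
  split_ifs at h with ht'
  · rwa [List.getD_eq_getElem _ _ ht']
  · rw [List.getD_eq_default _ _ (by omega)]
    simpa using h

def rank (k : ℕ) : List ℕ → ℤ
  | [m, _, _, _, _] => -m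
  | [j, i, _, _] => (k + 1) * i + j
  | [_, i, _] => (k + 1) * (i + 1)
  | _ => (k + 1) ^ 2

theorem ChunkStep.rank_lt {k : ℕ} {c c' : List ℕ} (h : ChunkStep k c c') :
    rank k c < rank k c' := by
  cases h <;> simp only [rank, pow5, sq, hinge, List.replicate_succ, List.replicate_zero] <;>
    push_cast <;> nlinarith

theorem nodup_chunks {k : ℕ} (hk : 1 ≤ k) : (chunks k).Nodup := by
  have h := ((isChain_chunks_append_nil hk).left_of_append.imp
    fun _ _ h => ChunkStep.rank_lt h)
  exact (List.isChain_map (rank k) |>.2 h).pairwise.nodup.of_map _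

/-- Where a factor of length 2 or 3 can start, read off from its letters alone: for instance
`a_i a_j a_i` with `j ≥ i + 2` starts one letter before or one letter after the beginning of
`(a_j a_i)²`. -/
def anchors : List ℕ → List (List ℕ × ℤ)
  | [a, b] =>
    if a = b then [(pow5 a, 0), (pow5 a, 2)]
    else if b < a then
      if a = b + 1 then [(pow5 a, 4), (hinge b, 0)] else [(sq b a, 0), (sq b a, 2)]
    else if b = a + 1 then [(hinge a, -1), (hinge a, 1)] else [(sq a b, -1), (sq a b, 1)]
  | [a, b, c] =>
    if a = b then [(pow5 a, if b = c then 0 else 3)]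
    else if b = c then [(pow5 a, 4)]
    else if a = c then
      if a < b then [(if b = a + 1 then hinge a else sq a b, -1)]
      else [(if a = b + 1 then hinge b else sq b a, 0)]
    else if a < b then [(hinge a, 1)] else [(sq b a, 2)]
  | _ => []

theorem ChunkStep.exists_anchor_of_length_eq_two {k o : ℕ} {c c' v : List ℕ}
    (h : ChunkStep k c c') (ho : o < c.length) (hv : v <+: (c ++ c').drop o)
    (hn : v.length = 2) : ∃ x ∈ anchors v, InWindow 2 c c' o x := by
  obtain ⟨a, b, rfl⟩ := List.length_eq_two.1 hn
  cases h <;> simp only [pow5, sq, hinge, List.length_replicate, List.length_cons,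
      List.length_nil, Nat.reduceAdd, Nat.zero_add] at ho <;>
    interval_cases o <;> simp [pow5, sq, hinge, List.replicate_succ] at hv <;>
    obtain ⟨rfl, rfl⟩ := hv <;>
    simp only [anchors] <;> split_ifs <;> first | omega |
      simp [InWindow, pow5, sq, hinge, List.replicate_succ]

theorem ChunkStep.exists_anchor_of_length_eq_three {k o : ℕ} {c c' v : List ℕ}
    (h : ChunkStep k c c') (ho : o < c.length) (hv : v <+: (c ++ c').drop o)
    (hn : v.length = 3) : ∃ x ∈ anchors v, InWindow 3 c c' o x := by
  obtain ⟨a, b, d, rfl⟩ := List.length_eq_three.1 hn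
  cases h <;> simp only [pow5, sq, hinge, List.length_replicate, List.length_cons,
      List.length_nil, Nat.reduceAdd, Nat.zero_add] at ho <;>
    interval_cases o <;> simp [pow5, sq, hinge, List.replicate_succ] at hv <;>
    obtain ⟨rfl, rfl, rfl⟩ := hv <;>
    simp only [anchors] <;> split_ifs <;> first | omega |
      simp [InWindow, pow5, sq, hinge, List.replicate_succ]

theorem ChunkStep.exists_anchor {k o : ℕ} {c c' v : List ℕ} (h : ChunkStep k c c')
    (ho : o < c.length) (hv : v <+: (c ++ c').drop o) (hn : v.length = 2 ∨ v.length = 3) :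
    ∃ x ∈ anchors v, InWindow v.length c c' o x := by
  rcases hn with hn | hn <;> rw [hn]
  · exact h.exists_anchor_of_length_eq_two ho hv hn
  · exact h.exists_anchor_of_length_eq_three ho hv hn

theorem three_le_length_of_mem_chunks {k : ℕ} (hk : 1 ≤ k) {c : List ℕ} (hc : c ∈ chunks k) :
    3 ≤ c.length := by
  obtain ⟨t, ht, rfl⟩ := List.getElem_of_mem hc
  exact (chunkStep_getElem hk ht).three_le_length

theorem length_anchors_of_length_eq_two {v : List ℕ} (hv : v.length = 2) :
    (anchors v).length = 2 := by
  obtain ⟨a, b, rfl⟩ := List.length_eq_two.1 hv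
  simp only [anchors]
  split_ifs <;> rfl

theorem length_anchors_of_length_eq_three {v : List ℕ} (hv : v.length = 3) :
    (anchors v).length = 1 := by
  obtain ⟨a, b, c, rfl⟩ := List.length_eq_three.1 hv
  simp only [anchors]
  split_ifs <;> rfl

theorem not_occursWithoutOverlap_length_anchors_add_one {k : ℕ} (hk : 1 ≤ k) {v : List ℕ}
    (hn : v.length = 2 ∨ v.length = 3) :
    ¬ OccursWithoutOverlap v (wk k) ((anchors v).length + 1) := by
  rw [wk_eq_flatten_chunks]
  exact not_occursWithoutOverlap_of_forall_inWindow (nodup_chunks hk) (by rintro rfl; simp at hn)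
    (fun c hc => (three_le_length_of_mem_chunks hk hc).trans' (by omega)) (Nat.lt_succ_self _)
    fun t ht o ho hpre => (chunkStep_getElem hk ht).exists_anchor ho hpre hn

theorem mem_Icc_of_mem_wk {k x : ℕ} (hx : x ∈ wk k) : x ∈ Finset.Icc 1 k := by
  simp only [wk, List.mem_append, List.mem_flatten, List.mem_map, List.mem_range] at hx
  rw [Finset.mem_Icc]
  rcases hx with ⟨_, ⟨i, hi, rfl⟩, hx⟩ | ⟨_, ⟨i, hi, rfl⟩, hx⟩
  · rw [List.mem_replicate] at hx
    omega
  · simp only [List.mem_append, List.mem_flatten, List.mem_map, List.mem_range, List.mem_cons,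
      List.not_mem_nil, or_false] at hx
    rcases hx with ⟨_, ⟨j, hj, rfl⟩, hx⟩ | hx
    · simp only [List.mem_cons, List.not_mem_nil, or_false] at hx
      omega
    · omega

theorem sum_range_map_sub_mul_four (n : ℕ) :
    ((List.range n).map fun i => (n - (i + 1)) * 4).sum = 2 * n * (n - 1) := by
  induction n with
  | zero => rfl
  | succ n ih =>
    rw [List.range_succ_eq_map, List.map_cons, List.sum_cons, List.map_map]
    simp only [Function.comp_def, Nat.add_sub_add_right, ih]
    rcases n with _ | n
    · rfl
    · simp only [tsub_zero, add_tsub_cancel_right]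
      ring

theorem length_wk {k : ℕ} (hk : 1 ≤ k) : (wk k).length = 2 * k ^ 2 + 2 * k + 1 := by
  obtain ⟨n, rfl⟩ := Nat.exists_eq_add_of_le' hk
  simp only [wk, List.reduceReplicate, Nat.reduceSubDiff, add_tsub_cancel_right,
    List.length_append, List.length_flatten, List.map_map, Function.comp_def, List.length_cons,
    List.length_nil, zero_add, Nat.reduceAdd, List.map_const', List.length_range,
    List.sum_replicate, smul_eq_mul, List.sum_map_add, sum_range_map_sub_mul_four]
  rcases n with _ | n
  · rfl
  · simp only [Nat.add_sub_cancel]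
    ring

end Wk

/-- For every `k ≥ 1`, the word `wk k` is a word over an alphabet of `k` letters of
length `2k² + 2k + 1` in which no length-2 factor occurs 3 times without overlap and
no length-3 factor occurs twice without overlap. -/
theorem incompressible_word_exists (k : ℕ) (hk : 1 ≤ k) :
    (∀ x ∈ wk k, x ∈ Finset.Icc 1 k) ∧
    (wk k).length = 2 * k ^ 2 + 2 * k + 1 ∧
    (¬ ∃ v : List ℕ, v.length = 2 ∧ OccursWithoutOverlap v (wk k) 3) ∧
    (¬ ∃ v : List ℕ, v.length = 3 ∧ OccursWithoutOverlap v (wk k) 2) :=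
  ⟨fun _ => Wk.mem_Icc_of_mem_wk, Wk.length_wk hk,
    fun ⟨_, hv, h⟩ => Wk.not_occursWithoutOverlap_length_anchors_add_one hk (.inl hv)
      (by rwa [Wk.length_anchors_of_length_eq_two hv]),
    fun ⟨_, hv, h⟩ => Wk.not_occursWithoutOverlap_length_anchors_add_one hk (.inr hv)
      (by rwa [Wk.length_anchors_of_length_eq_three hv])⟩
end

section
/- A word v ∈ {a,b}^* is a factor of some word in the image of φ if and only if v contains no factor of the form a^k, where φ: {c₀,…,c_{k-1}}^* → {a,b}^* is the homomorphism with φ(c_i) = a^i b. -/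
/-- The binary encoding `φ : {c₀,…,c_{k-1}}^* → {a,b}^*`, `φ(c_i) = aⁱb`,
where `a := true` and `b := false`. -/
def phi {k : ℕ} (w : List (Fin k)) : List Bool :=
  (w.map (fun c => List.replicate (c : ℕ) true ++ [false])).flatten

namespace List

variable {α : Type*}

theorem prefix_of_prefix_append_cons {u A B : List α} {x : α} (hx : x ∉ u)
    (h : u <+: A ++ x :: B) : u <+: A := by
  by_contra hA
  have hlen : A.length < u.length := by
    by_contra! hle
    exact hA (prefix_of_prefix_length_le h (prefix_append A _) hle)
  have hAx : A ++ [x] <+: u :=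
    prefix_of_prefix_length_le (by simp) h (by simpa using hlen)
  exact hx (hAx.subset (by simp))

theorem infix_or_infix_of_infix_append_cons {u A B : List α} {x : α} (hx : x ∉ u)
    (h : u <:+: A ++ x :: B) : u <:+: A ∨ u <:+: B := by
  induction A with
  | nil =>
    rcases infix_cons_iff.1 h with h | h
    · exact Or.inl (prefix_of_prefix_append_cons (A := []) hx h).isInfix
    · exact Or.inr h
  | cons a A ih =>
    rcases infix_cons_iff.1 h with h | h
    · exact Or.inl (prefix_of_prefix_append_cons hx h).isInfix
    · exact (ih h).imp_left (·.trans (suffix_cons a A).isInfix)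

theorem flatten_map_append_singleton {L : List (List α)} (hL : L ≠ []) (x : α) :
    (L.map (· ++ [x])).flatten = [x].intercalate L ++ [x] := by
  induction L with
  | nil => exact absurd rfl hL
  | cons l L ih =>
    cases L with
    | nil => simp
    | cons l' L =>
      rw [map_cons, flatten_cons, ih (cons_ne_nil _ _), intercalate_cons_cons]
      simp

theorem eq_replicate_true_of_false_not_mem {l : List Bool} (h : false ∉ l) :
    l = replicate l.length true :=
  eq_replicate_of_mem fun b hb => by cases b <;> simp_all

variable [BEq α] [LawfulBEq α]

theorem not_mem_of_mem_splitOn {xs l : List α} {x : α} (h : l ∈ xs.splitOn x) : x ∉ l := by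
  induction xs generalizing l with
  | nil => simp_all
  | cons a xs ih =>
    rw [splitOn_cons_eq_if_modifyHead] at h
    split_ifs at h with hax
    · rcases mem_cons.1 h with rfl | h
      · exact not_mem_nil
      · exact ih h
    · obtain ⟨l₀, ls, hls⟩ := exists_cons_of_ne_nil (splitOn_ne_nil x xs)
      rw [hls, modifyHead_cons] at h
      rcases mem_cons.1 h with rfl | h
      · exact not_mem_cons_of_ne_of_not_mem (Ne.symm (by simpa using hax))
          (ih (hls ▸ mem_cons_self))
      · exact ih (hls ▸ mem_cons_of_mem _ h)

theorem infix_of_mem_splitOn {xs l : List α} {x : α} (h : l ∈ xs.splitOn x) : l <:+: xs := by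
  have hl : l ++ [x] <:+: xs ++ [x] := by
    have := infix_of_mem_flatten (mem_map_of_mem (f := (· ++ [x])) h)
    rwa [flatten_map_append_singleton (splitOn_ne_nil x xs), intercalate_splitOn] at this
  rcases infix_or_infix_of_infix_append_cons (not_mem_of_mem_splitOn h)
    ((prefix_append l [x]).isInfix.trans hl) with h | h
  · exact h
  · exact (eq_nil_of_infix_nil h) ▸ nil_infix

end List

open List

theorem phi_cons {k : ℕ} (c : Fin k) (w : List (Fin k)) :
    phi (c :: w) = replicate c true ++ false :: phi w := by
  simp [phi]

theorem not_replicate_infix_phi {k : ℕ} (hk : 0 < k) (w : List (Fin k)) :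
    ¬ replicate k true <:+: phi w := by
  induction w with
  | nil => simp [phi, hk.ne']
  | cons c w ih =>
    intro h
    rw [phi_cons] at h
    rcases infix_or_infix_of_infix_append_cons (by simp) h with h | h
    · exact (infix_replicate_iff.1 h).1.not_gt (by simp)
    · exact ih h

theorem exists_phi_eq_flatten {k : ℕ} {L : List (List Bool)}
    (hL : ∀ l ∈ L, ∃ c : Fin k, l = replicate c true) :
    ∃ w : List (Fin k), phi w = (L.map (· ++ [false])).flatten := by
  induction L with
  | nil => exact ⟨[], rfl⟩
  | cons l L ih =>
    obtain ⟨c, rfl⟩ := hL l mem_cons_self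
    obtain ⟨w, hw⟩ := ih fun l hl => hL l (mem_cons_of_mem _ hl)
    exact ⟨c :: w, by simp [phi_cons, hw]⟩

/-- A binary word is a factor of some word in the image of `φ` iff it does not
contain `a^k` (i.e. `k` consecutive `a`'s) as a factor. -/
theorem phi_factor_characterization (k : ℕ) (hk : 1 ≤ k) (v : List Bool) :
    (∃ w : List (Fin k), v <:+: phi w) ↔ ¬ (List.replicate k true <:+: v) := by
  constructor
  · rintro ⟨w, hw⟩ h
    exact not_replicate_infix_phi hk w (h.trans hw)
  · intro hv
    have hblocks : ∀ l ∈ v.splitOn false, ∃ c : Fin k, l = replicate c true := by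
      intro l hl
      have hl_eq := eq_replicate_true_of_false_not_mem (not_mem_of_mem_splitOn hl)
      refine ⟨⟨l.length, lt_of_not_ge fun hkl => hv ?_⟩, hl_eq⟩
      refine IsInfix.trans ?_ (infix_of_mem_splitOn hl)
      rw [hl_eq]
      exact infix_replicate_iff.2 ⟨by simp [hkl], by simp⟩
    obtain ⟨w, hw⟩ := exists_phi_eq_flatten hblocks
    refine ⟨w, ?_⟩
    rw [hw, flatten_map_append_singleton (splitOn_ne_nil _ _), intercalate_splitOn]
    exact (prefix_append v [false]).isInfix
end

section
/- Let Σ = {c₀,…,c_{k-1}} and φ: Σ^* → {a,b}^* the homomorphism with φ(c_i) = a^i b. For every w ∈ Σ^*, from any SLP B producing φ(w) one can obtain an SLP producing w of size at most 2·|B|; in particular g(w) ≤ 2·g(φ(w)). -/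
/-!
Reading `φ(w)` from left to right while counting the current run of `a`s, each `b` outputs the
count; this recovers `w`. A nonterminal `X` of `B` derives a word `aᵖ b v` (or one without `b`),
and the decoded grammar keeps `X` as a nonterminal deriving the decoding of `v`, that is, of
everything after the first block. In a right-hand side, an occurrence of a symbol containing a `b`
becomes at most two symbols: the letter closed by its first `b`, whose run began to its left, and
the nonterminal for the rest. So right-hand sides at most double. Only the start nonterminal keeps
its first block, as nothing precedes it.
-/

namespace Blocks

/-- The decoder's state: `some p` after reading `p` letters `a` since the last `b`; `none` before
the first `b`, when the current block is the end of a letter's code and is dropped. -/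
def step : Option ℕ → Bool → Option ℕ
  | st, true => st.map (· + 1)
  | _, false => some 0

def decode : Option ℕ → List Bool → List ℕ
  | _, [] => []
  | st, true :: u => decode (st.map (· + 1)) u
  | st, false :: u => st.toList ++ decode (some 0) u

def firstLetter : Option ℕ → List Bool → List ℕ
  | _, [] => []
  | st, true :: u => firstLetter (st.map (· + 1)) u
  | st, false :: _ => st.toList

theorem decode_append (st : Option ℕ) (u v : List Bool) :
    decode st (u ++ v) = decode st u ++ decode (u.foldl step st) v := by
  induction u generalizing st with
  | nil => rfl
  | cons b u ih => cases b <;> simp [decode, step, ih]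

theorem decode_eq_firstLetter_append (st : Option ℕ) (u : List Bool) :
    decode st u = firstLetter st u ++ decode none u := by
  induction u generalizing st with
  | nil => rfl
  | cons b u ih =>
    cases b
    · simp [decode, firstLetter]
    · simp only [decode, firstLetter, Option.map_none]
      exact ih _

theorem length_firstLetter_le_one (st : Option ℕ) (u : List Bool) :
    (firstLetter st u).length ≤ 1 := by
  induction u generalizing st with
  | nil => simp [firstLetter]
  | cons b u ih => cases b <;> cases st <;> simp [firstLetter, ih]

theorem decode_replicate_true_append (st : Option ℕ) (m : ℕ) (u : List Bool) :
    decode st (List.replicate m true ++ u) = decode (st.map (· + m)) u := by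
  induction m generalizing st with
  | zero => simp
  | succ m ih =>
    rw [List.replicate_succ, List.cons_append, decode, ih, Option.map_map]
    congr 2
    funext p
    simp only [Function.comp_apply]
    omega

theorem phi_cons {k : ℕ} (c : Fin k) (w : List (Fin k)) :
    phi (c :: w) = List.replicate c true ++ false :: phi w := by
  simp [phi]

theorem decode_phi {k : ℕ} (w : List (Fin k)) : decode (some 0) (phi w) = w.map Fin.val := by
  induction w with
  | nil => rfl
  | cons c w ih => simp [phi_cons, decode_replicate_true_append, decode, ih]

end Blocks

namespace SLP

variable {α β : Type}

def evalSym (G : SLP α) : α ⊕ Fin G.n → List α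
  | .inl a => [a]
  | .inr j => G.valAux j

theorem valAux_eq_flatMap (G : SLP α) (i : Fin G.n) :
    G.valAux i = (G.rhs i).flatMap G.evalSym := by
  rw [valAux]
  conv_rhs => rw [← List.attach_map_subtype_val (G.rhs i), List.flatMap_map]
  congr 1
  funext ⟨s, hs⟩
  cases s <;> rfl

theorem valAux_ne_nil (G : SLP α) (i : Fin G.n) : G.valAux i ≠ [] := by
  induction i using WellFoundedLT.induction with
  | _ i ih =>
    obtain ⟨s, hs⟩ := List.exists_mem_of_ne_nil _ (G.rhs_ne i)
    rw [valAux_eq_flatMap, Ne, List.flatMap_eq_nil_iff]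
    intro h
    cases s with
    | inl a => simpa [evalSym] using h _ hs
    | inr j => exact ih j (G.acyc i j hs) (h _ hs)

theorem val_ne_nil (G : SLP α) : G.val ≠ [] := G.valAux_ne_nil G.start

def ofList (w : List α) (hw : w ≠ []) : SLP α where
  n := 1
  rhs _ := w.map .inl
  rhs_ne _ := by simpa using hw
  acyc _ _ h := by simp at h
  start := 0

theorem val_ofList (w : List α) (hw : w ≠ []) : (ofList w hw).val = w := by
  rw [val, valAux_eq_flatMap]
  simp [ofList, List.flatMap_map, evalSym]

def map (f : α → β) (G : SLP α) : SLP β where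
  n := G.n
  rhs i := (G.rhs i).map (Sum.map f id)
  rhs_ne i := by simpa using G.rhs_ne i
  acyc i j h := G.acyc i j (by simpa using h)
  start := G.start

theorem valAux_map (f : α → β) (G : SLP α) (i : Fin G.n) :
    (G.map f).valAux i = (G.valAux i).map f := by
  induction i using WellFoundedLT.induction with
  | _ i ih =>
    refine (valAux_eq_flatMap (G.map f) i).trans ?_
    rw [valAux_eq_flatMap G, List.map_flatMap]
    simp only [map, List.flatMap_map]
    refine List.flatMap_congr fun s hs => ?_
    cases s with
    | inl a => rfl
    | inr j => exact ih j (G.acyc i j hs)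

theorem val_map (f : α → β) (G : SLP α) : (G.map f).val = G.val.map f :=
  G.valAux_map f G.start

theorem size_map (f : α → β) (G : SLP α) : (G.map f).size = G.size := by
  simp only [size, map, List.length_map]
  rfl

end SLP

section MinimalSize

variable {α β : Type}

theorem g_nil : g ([] : List α) = 0 := by
  simp [g, SLP.val_ne_nil]

theorem g_le_size (G : SLP α) : g G.val ≤ G.size :=
  Nat.sInf_le ⟨G, rfl, rfl⟩

theorem exists_val_eq_and_size_eq_g {w : List α} (hw : w ≠ []) :
    ∃ G : SLP α, G.val = w ∧ G.size = g w := by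
  have hne : { s | ∃ G : SLP α, G.size = s ∧ G.val = w }.Nonempty :=
    ⟨_, SLP.ofList w hw, rfl, SLP.val_ofList w hw⟩
  obtain ⟨G, hsize, hval⟩ := Nat.sInf_mem hne
  exact ⟨G, hval, hsize⟩

theorem g_le_mul_g_of_forall_slp {w : List α} {u : List β} {c : ℕ} (hu : u ≠ [])
    (h : ∀ B : SLP β, B.val = u → ∃ A : SLP α, A.val = w ∧ A.size ≤ c * B.size) :
    g w ≤ c * g u := by
  obtain ⟨B, hBval, hBsize⟩ := exists_val_eq_and_size_eq_g hu
  obtain ⟨A, rfl, hA⟩ := h B hBval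
  exact (g_le_size A).trans (hBsize ▸ hA)

end MinimalSize

namespace SLP

open Blocks

variable (B : SLP Bool)

def decodeTail : Bool ⊕ Fin B.n → List (ℕ ⊕ Fin B.n)
  | .inl _ => []
  | .inr j => if decode none (B.valAux j) = [] then [] else [.inr j]

def decodeSym (st : Option ℕ) (s : Bool ⊕ Fin B.n) : List (ℕ ⊕ Fin B.n) :=
  (firstLetter st (B.evalSym s)).map .inl ++ B.decodeTail s

def decodeRhs : Option ℕ → List (Bool ⊕ Fin B.n) → List (ℕ ⊕ Fin B.n)
  | _, [] => []
  | st, s :: l => B.decodeSym st s ++ decodeRhs ((B.evalSym s).foldl step st) l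

def initState (i : Fin B.n) : Option ℕ := if i = B.start then some 0 else none

theorem mem_of_mem_decodeSym {st : Option ℕ} {s : Bool ⊕ Fin B.n} {j : Fin B.n}
    (h : .inr j ∈ B.decodeSym st s) : s = .inr j := by
  cases s with
  | inl a => simp [decodeSym, decodeTail] at h
  | inr j' =>
    by_cases hj' : decode none (B.valAux j') = [] <;> simp_all [decodeSym, decodeTail]

theorem mem_of_mem_decodeRhs {st : Option ℕ} {l : List (Bool ⊕ Fin B.n)} {j : Fin B.n}
    (h : .inr j ∈ B.decodeRhs st l) : .inr j ∈ l := by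
  induction l generalizing st with
  | nil => simp [decodeRhs] at h
  | cons s l ih =>
    rcases List.mem_append.1 h with h | h
    · exact B.mem_of_mem_decodeSym h ▸ List.mem_cons_self
    · exact List.mem_cons_of_mem _ (ih h)

/-- Rows decoding to the empty word are referenced neither from `start` nor from below it,
and get the dummy letter `0`. -/
def decodeSLP : SLP ℕ where
  n := B.n
  rhs i := if B.decodeRhs (B.initState i) (B.rhs i) = [] then [.inl 0]
    else B.decodeRhs (B.initState i) (B.rhs i)
  rhs_ne i := by split <;> simp_all
  acyc i j h := by
    split at h
    · simp at h
    · exact B.acyc i j (B.mem_of_mem_decodeRhs h)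
  start := B.start

theorem length_decodeSym_le (st : Option ℕ) (s : Bool ⊕ Fin B.n) :
    (B.decodeSym st s).length ≤ 2 := by
  have hfirst := length_firstLetter_le_one st (B.evalSym s)
  have htail : (B.decodeTail s).length ≤ 1 := by
    cases s with
    | inl a => simp [decodeTail]
    | inr j => simp only [decodeTail]; split <;> simp
  simp only [decodeSym, List.length_append, List.length_map]
  omega

theorem length_decodeRhs_le (st : Option ℕ) (l : List (Bool ⊕ Fin B.n)) :
    (B.decodeRhs st l).length ≤ 2 * l.length := by
  induction l generalizing st with
  | nil => simp [decodeRhs]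
  | cons s l ih =>
    have := B.length_decodeSym_le st s
    have := ih ((B.evalSym s).foldl step st)
    simp only [decodeRhs, List.length_append, List.length_cons]
    omega

theorem size_decodeSLP_le : B.decodeSLP.size ≤ 2 * B.size := by
  rw [size, size, Finset.mul_sum]
  refine Finset.sum_le_sum fun i _ => ?_
  have hpos := List.length_pos_iff.2 (B.rhs_ne i)
  have hrow := B.length_decodeRhs_le (B.initState i) (B.rhs i)
  show (if B.decodeRhs (B.initState i) (B.rhs i) = [] then [.inl 0]
    else B.decodeRhs (B.initState i) (B.rhs i)).length ≤ _
  by_cases h : B.decodeRhs (B.initState i) (B.rhs i) = []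
  · rw [if_pos h, List.length_singleton]
    omega
  · rwa [if_neg h]

theorem flatMap_decodeSym {ev : ℕ ⊕ Fin B.n → List ℕ} (hinl : ∀ m, ev (.inl m) = [m])
    {st : Option ℕ} {s : Bool ⊕ Fin B.n}
    (hinr : ∀ j, s = .inr j → decode none (B.valAux j) ≠ [] →
      ev (.inr j) = decode none (B.valAux j)) :
    (B.decodeSym st s).flatMap ev = decode st (B.evalSym s) := by
  have htail : (B.decodeTail s).flatMap ev = decode none (B.evalSym s) := by
    cases s with
    | inl b => cases b <;> rfl
    | inr j =>
      simp only [decodeTail]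
      split <;> simp_all [evalSym]
  rw [decodeSym, List.flatMap_append, htail, decode_eq_firstLetter_append st]
  simp [List.flatMap_map, hinl]

theorem flatMap_decodeRhs {ev : ℕ ⊕ Fin B.n → List ℕ} (hinl : ∀ m, ev (.inl m) = [m])
    {st : Option ℕ} {l : List (Bool ⊕ Fin B.n)}
    (hinr : ∀ j, .inr j ∈ l → decode none (B.valAux j) ≠ [] →
      ev (.inr j) = decode none (B.valAux j)) :
    (B.decodeRhs st l).flatMap ev = decode st (l.flatMap B.evalSym) := by
  induction l generalizing st with
  | nil => rfl
  | cons s l ih =>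
    rw [decodeRhs, List.flatMap_append, List.flatMap_cons, decode_append,
      B.flatMap_decodeSym hinl fun j hj => hinr j (hj ▸ List.mem_cons_self),
      ih fun j hj => hinr j (List.mem_cons_of_mem _ hj)]

def DecodedAt (j : Fin B.n) : Prop :=
  decode none (B.valAux j) ≠ [] → B.decodeSLP.valAux j = decode none (B.valAux j)

theorem valAux_decodeSLP (i : Fin B.n) (hi : ∀ j < i, B.DecodedAt j)
    (hne : decode (B.initState i) (B.valAux i) ≠ []) :
    B.decodeSLP.valAux i = decode (B.initState i) (B.valAux i) := by
  have hrow : (B.decodeRhs (B.initState i) (B.rhs i)).flatMap B.decodeSLP.evalSym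
      = decode (B.initState i) (B.valAux i) := by
    rw [valAux_eq_flatMap B i]
    exact B.flatMap_decodeRhs (fun _ => rfl) fun j hj => hi j (B.acyc i j hj)
  have hrhs : B.decodeSLP.rhs i = B.decodeRhs (B.initState i) (B.rhs i) :=
    if_neg fun h => hne (hrow.symm.trans (congrArg (List.flatMap B.decodeSLP.evalSym) h))
  exact (valAux_eq_flatMap B.decodeSLP i).trans
    ((congrArg (List.flatMap B.decodeSLP.evalSym) hrhs).trans hrow)

theorem decodedAt_of_lt_start (i : Fin B.n) (hi : i < B.start) : B.DecodedAt i := by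
  induction i using WellFoundedLT.induction with
  | _ i ih =>
    have hinit : B.initState i = none := if_neg hi.ne
    intro hne
    rw [← hinit] at hne ⊢
    exact B.valAux_decodeSLP i (fun j hj => ih j hj (hj.trans hi)) hne

theorem val_decodeSLP (hne : decode (some 0) B.val ≠ []) :
    B.decodeSLP.val = decode (some 0) B.val := by
  have hinit : B.initState B.start = some 0 := if_pos rfl
  rw [val, ← hinit] at hne ⊢
  exact B.valAux_decodeSLP B.start B.decodedAt_of_lt_start hne

theorem exists_val_eq_and_size_le_of_val_eq_phi {k : ℕ} {w : List (Fin k)} (hB : B.val = phi w) :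
    ∃ A : SLP (Fin k), A.val = w ∧ A.size ≤ 2 * B.size := by
  have hdecode : decode (some 0) B.val = w.map Fin.val := hB ▸ decode_phi w
  have hw : w ≠ [] := by rintro rfl; exact B.val_ne_nil hB
  obtain ⟨c, -⟩ := List.exists_mem_of_ne_nil w hw
  have : NeZero k := ⟨c.pos.ne'⟩
  refine ⟨B.decodeSLP.map (Fin.ofNat k), ?_, ?_⟩
  · rw [val_map, B.val_decodeSLP (hdecode ▸ by simpa using hw), hdecode, List.map_map]
    simp [Function.comp_def]
  · exact (size_map _ _).trans_le B.size_decodeSLP_le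

end SLP

theorem slp_decode_general (k : ℕ) (w : List (Fin k)) :
    (∀ B : SLP Bool, B.val = phi w →
      ∃ A : SLP (Fin k), A.val = w ∧ A.size ≤ 2 * B.size) ∧
    g w ≤ 2 * g (phi w) := by
  have hdecode (B : SLP Bool) (hB : B.val = phi w) :
      ∃ A : SLP (Fin k), A.val = w ∧ A.size ≤ 2 * B.size :=
    B.exists_val_eq_and_size_le_of_val_eq_phi hB
  refine ⟨hdecode, ?_⟩
  rcases w with _ | ⟨c, w⟩
  · simp [g_nil]
  · exact g_le_mul_g_of_forall_slp (by simp [Blocks.phi_cons]) hdecode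

/-- From any SLP `B` for `φ(w)` one obtains an SLP for `w` of size at most `2·|B|`;
in particular `g(w) ≤ 2·g(φ(w))`. -/
theorem slp_decode (k : ℕ) (hk : 1 ≤ k) (w : List (Fin k)) :
    (∀ B : SLP Bool, B.val = phi w →
      ∃ A : SLP (Fin k), A.val = w ∧ A.size ≤ 2 * B.size) ∧
    g w ≤ 2 * g (phi w) :=
  slp_decode_general k w
end

section
/- For every k ≥ 2, when the word s_k = (u_k a^{m_k+1})^{m_k} u_k (with u_k and m_k as defined from k) is split into consecutive non-overlapping blocks of length m_k + ⌈log₂ k⌉ = 2^{k−⌈log₂ k⌉}, the set of blocks that occur is exactly F_k = { a^i bin_k(j) a^{m_k − i} : 0 ≤ j ≤ k−1, 0 ≤ i ≤ m_k }, and |F_k| = (m_k + 1)·k. -/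
-- The alphabet `{0, 1, a}` is modelled as `Fin 3`, with `a := (2 : Fin 3)`.
/-- `binpad L j` : the binary representation of `j`, padded with leading zeros to
`L` digits (most significant digit first), as a word over `{0,1} ⊆ Fin 3`. -/
def binpad (L j : ℕ) : List (Fin 3) :=
  (List.range L).map (fun t => if Nat.testBit j (L - 1 - t) then (1 : Fin 3) else 0)

/-- `mk k = 2^{k - ⌈log₂ k⌉} - ⌈log₂ k⌉`. -/
def mk' (k : ℕ) : ℕ := 2 ^ (k - Nat.clog 2 k) - Nat.clog 2 k

/-- `uk k = (∏_{j=0}^{k-2} bin_k(j) a^{m_k}) bin_k(k-1)`. -/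
def uk (k : ℕ) : List (Fin 3) :=
  ((List.range (k - 1)).map
      (fun j => binpad (Nat.clog 2 k) j ++ List.replicate (mk' k) 2)).flatten ++
    binpad (Nat.clog 2 k) (k - 1)

/-- `sk k = (u_k a^{m_k+1})^{m_k} u_k`. -/
def sk (k : ℕ) : List (Fin 3) :=
  (List.replicate (mk' k) (uk k ++ List.replicate (mk' k + 1) 2)).flatten ++ uk k

/-!
Write `F(i, j) = aⁱ bin_k(j) a^{m_k - i}`. Concatenating the row `F(i, 0) ⋯ F(i, k - 1)` gives
`aⁱ u_k a^{m_k - i}`, since the gap `a^{m_k - i} aⁱ` between consecutive binary codes is the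
`a^{m_k}` of `u_k`; concatenating these rows for `i = 0, …, m_k` gives `s_k`, the gaps
`a^{m_k - i} a^{i + 1}` being `a^{m_k + 1}`. Every `F(i, j)` has length
`m_k + ⌈log₂ k⌉ = 2^{k - ⌈log₂ k⌉}`, so the blocks of `s_k` are the `F(i, j)` in lexicographic order.
They are pairwise distinct: `i` is the number of leading `a`s, because a binary code is nonempty
and contains no `a`, and then `j < k ≤ 2^{⌈log₂ k⌉}` is determined by its code.
-/

namespace List

variable {α : Type*}

theorem length_flatten_of_forall_length_eq {L : List (List α)} {B : ℕ}
    (h : ∀ l ∈ L, l.length = B) : L.flatten.length = L.length * B := by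
  rw [length_flatten, map_congr_left h, map_const', sum_replicate, smul_eq_mul]

theorem take_drop_flatten_of_forall_length_eq {L : List (List α)} {B : ℕ}
    (h : ∀ l ∈ L, l.length = B) {t : ℕ} (ht : t < L.length) :
    (L.flatten.drop (t * B)).take B = L[t] := by
  induction L generalizing t with
  | nil => simp at ht
  | cons l L ih =>
    obtain rfl : l.length = B := h l mem_cons_self
    cases t with
    | zero => simp
    | succ t =>
      rw [flatten_cons, Nat.succ_mul, Nat.add_comm, drop_length_add_append]
      exact ih (fun l' hl' => h l' (mem_cons_of_mem _ hl')) (by simpa using ht)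

theorem map_range_take_drop_flatten {L : List (List α)} {B : ℕ} (hB : 0 < B)
    (h : ∀ l ∈ L, l.length = B) :
    (range (L.flatten.length / B)).map (fun t => (L.flatten.drop (t * B)).take B) = L := by
  rw [length_flatten_of_forall_length_eq h, Nat.mul_div_cancel _ hB]
  refine ext_getElem (by simp) fun t _ ht => ?_
  simpa using take_drop_flatten_of_forall_length_eq h ht

theorem flatten_map_range_succ_append_append (p w s : ℕ → List α) (n : ℕ) :
    ((range (n + 1)).map fun j => p j ++ w j ++ s j).flatten =
      p 0 ++ ((range n).map fun j => w j ++ (s j ++ p (j + 1))).flatten ++ w n ++ s n := by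
  induction n with
  | zero => simp
  | succ n ih =>
    rw [range_succ, map_append, flatten_append, ih, range_succ]
    simp

theorem replicate_append_inj {c : α} {i i' : ℕ} {w w' : List α}
    (hw : w.head? ≠ some c) (hw' : w'.head? ≠ some c)
    (h : replicate i c ++ w = replicate i' c ++ w') : i = i' ∧ w = w' := by
  induction i generalizing i' with
  | zero =>
    cases i' with
    | zero => simpa using h
    | succ => subst h; simp [replicate_succ] at hw
  | succ i ih =>
    cases i' with
    | zero => subst h; simp [replicate_succ] at hw'
    | succ i' => simpa using ih (by simpa [replicate_succ] using h)

end List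

theorem Nat.two_mul_le_two_pow (n : ℕ) : 2 * n ≤ 2 ^ n := by
  rcases n with _ | n
  · simp
  · have := Nat.lt_two_pow_self (n := n)
    rw [pow_succ]
    omega

theorem Nat.clog_two_le_two_pow_sub_clog {k : ℕ} (hk : 2 ≤ k) :
    Nat.clog 2 k ≤ 2 ^ (k - Nat.clog 2 k) := by
  -- with `L = clog 2 k`: `2 (L - 1) ≤ 2^(L - 1) < k`, so `L - 1 ≤ k - L < 2^(k - L)`
  have hpos : 0 < Nat.clog 2 k := Nat.clog_pos (by norm_num) hk
  have hlt : 2 ^ (Nat.clog 2 k - 1) < k := Nat.pow_pred_clog_lt_self (by norm_num) hk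
  have := Nat.two_mul_le_two_pow (Nat.clog 2 k - 1)
  have := Nat.lt_two_pow_self (n := k - Nat.clog 2 k)
  omega

theorem mk'_add_clog {k : ℕ} (hk : 2 ≤ k) : mk' k + Nat.clog 2 k = 2 ^ (k - Nat.clog 2 k) := by
  have := Nat.clog_two_le_two_pow_sub_clog hk
  unfold mk'
  omega

@[simp] theorem length_binpad (L j : ℕ) : (binpad L j).length = L := by
  simp [binpad]

theorem two_notMem_binpad (L j : ℕ) : (2 : Fin 3) ∉ binpad L j := by
  simp only [binpad, List.mem_map, List.mem_range, not_exists, not_and]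
  intro t _
  split <;> decide

theorem binpad_inj_of_lt_two_pow {L j j' : ℕ} (hj : j < 2 ^ L) (hj' : j' < 2 ^ L)
    (h : binpad L j = binpad L j') : j = j' := by
  refine Nat.eq_of_testBit_eq fun b => ?_
  rcases lt_or_ge b L with hb | hb
  · have := List.map_inj_left.mp h (L - 1 - b) (List.mem_range.mpr (by omega))
    rw [Nat.sub_sub_self (by omega : b ≤ L - 1)] at this
    cases h1 : Nat.testBit j b <;> cases h2 : Nat.testBit j' b <;> simp_all
  · rw [Nat.testBit_lt_two_pow (hj.trans_le (Nat.pow_le_pow_right two_pos hb)),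
      Nat.testBit_lt_two_pow (hj'.trans_le (Nat.pow_le_pow_right two_pos hb))]

def fkWord (k i j : ℕ) : List (Fin 3) :=
  List.replicate i 2 ++ binpad (Nat.clog 2 k) j ++ List.replicate (mk' k - i) 2

theorem length_fkWord {k i : ℕ} (hk : 2 ≤ k) (hi : i ≤ mk' k) (j : ℕ) :
    (fkWord k i j).length = 2 ^ (k - Nat.clog 2 k) := by
  have := mk'_add_clog hk
  simp only [fkWord, List.length_append, List.length_replicate, length_binpad]
  omega

theorem fkWord_inj {k i i' j j' : ℕ} (hk : 2 ≤ k) (hj : j < k) (hj' : j' < k)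
    (h : fkWord k i j = fkWord k i' j') : i = i' ∧ j = j' := by
  have hL : 0 < Nat.clog 2 k := Nat.clog_pos (by norm_num) hk
  have hhead : ∀ j r, (binpad (Nat.clog 2 k) j ++ List.replicate r 2).head? ≠ some 2 := by
    intro j r hjr
    have hne : binpad (Nat.clog 2 k) j ≠ [] := List.ne_nil_of_length_pos (by simpa using hL)
    rw [List.head?_append_of_ne_nil _ hne] at hjr
    exact two_notMem_binpad _ _ (List.mem_of_mem_head? hjr)
  simp only [fkWord, List.append_assoc] at h
  obtain ⟨rfl, h⟩ := List.replicate_append_inj (hhead j _) (hhead j' _) h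
  have hk2 := Nat.le_pow_clog (by norm_num : 1 < 2) k
  exact ⟨rfl, binpad_inj_of_lt_two_pow (by omega) (by omega) (List.append_cancel_right h)⟩

theorem flatten_map_range_fkWord {k i : ℕ} (hk : 1 ≤ k) (hi : i ≤ mk' k) :
    ((List.range k).map (fkWord k i)).flatten =
      List.replicate i 2 ++ uk k ++ List.replicate (mk' k - i) 2 := by
  obtain ⟨n, rfl⟩ : ∃ n, k = n + 1 := ⟨k - 1, by omega⟩
  unfold fkWord
  rw [List.flatten_map_range_succ_append_append, ← List.replicate_add, Nat.sub_add_cancel hi]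
  simp only [uk, Nat.add_sub_cancel, List.append_assoc]

theorem sk_eq_flatten_fkWord {k : ℕ} (hk : 1 ≤ k) :
    sk k = ((List.range (mk' k + 1)).flatMap fun i => (List.range k).map (fkWord k i)).flatten := by
  have hrow : ∀ i ∈ List.range (mk' k + 1), ((List.range k).map (fkWord k i)).flatten =
      List.replicate i 2 ++ uk k ++ List.replicate (mk' k - i) 2 := fun i hi =>
    flatten_map_range_fkWord hk (by simpa [Nat.lt_succ_iff] using hi)
  have hgap : ∀ i ∈ List.range (mk' k),
      uk k ++ (List.replicate (mk' k - i) 2 ++ List.replicate (i + 1) 2) =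
        uk k ++ List.replicate (mk' k + 1) 2 := fun i hi => by
    have := List.mem_range.mp hi
    rw [← List.replicate_add, show mk' k - i + (i + 1) = mk' k + 1 by omega]
  have hrows := List.flatten_map_range_succ_append_append (fun i => List.replicate i (2 : Fin 3))
    (fun _ => uk k) (fun i => List.replicate (mk' k - i) 2) (mk' k)
  beta_reduce at hrows
  rw [List.flatMap_def, List.flatten_flatten, List.map_map, Function.comp_def,
    List.map_congr_left hrow, hrows, List.map_congr_left hgap, List.map_const', List.length_range]
  simp [sk]

/-- Splitting `s_k` into consecutive blocks of length `2^{k-⌈log₂ k⌉}` yields exactly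
the set `F_k = { aⁱ bin_k(j) a^{m_k-i} : 0 ≤ j ≤ k-1, 0 ≤ i ≤ m_k }`, which has
`(m_k + 1)·k` elements. -/
theorem sk_blocks (k : ℕ) (hk : 2 ≤ k) :
    ((List.range ((sk k).length / 2 ^ (k - Nat.clog 2 k))).map
        (fun t => (((sk k).drop (t * 2 ^ (k - Nat.clog 2 k))).take
          (2 ^ (k - Nat.clog 2 k))))).toFinset
      = (Finset.range (mk' k + 1) ×ˢ Finset.range k).image
          (fun p => List.replicate p.1 (2 : Fin 3) ++ binpad (Nat.clog 2 k) p.2 ++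
            List.replicate (mk' k - p.1) 2) ∧
    ((Finset.range (mk' k + 1) ×ˢ Finset.range k).image
          (fun p => List.replicate p.1 (2 : Fin 3) ++ binpad (Nat.clog 2 k) p.2 ++
            List.replicate (mk' k - p.1) 2)).card = (mk' k + 1) * k := by
  have hlength : ∀ w ∈ (List.range (mk' k + 1)).flatMap fun i => (List.range k).map (fkWord k i),
      w.length = 2 ^ (k - Nat.clog 2 k) := by
    simp only [List.mem_flatMap, List.mem_map, List.mem_range]
    rintro _ ⟨i, hi, j, -, rfl⟩
    exact length_fkWord hk (Nat.lt_succ_iff.mp hi) j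
  rw [sk_eq_flatten_fkWord (by omega), List.map_range_take_drop_flatten (by positivity) hlength]
  refine ⟨?_, Finset.card_image_of_injOn ?_ |>.trans (by simp)⟩
  · ext w
    simp [fkWord, and_assoc]
  · rintro ⟨i, j⟩ hij ⟨i', j'⟩ hij' h
    simp only [Finset.coe_product, Set.mem_prod, Finset.mem_coe, Finset.mem_range] at hij hij'
    obtain ⟨rfl, rfl⟩ := fkWord_inj hk hij.2 hij'.2 h
    rfl
end
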